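/- Let 𝒵 = ℝ^d, let ‖·‖ be a norm on ℝ^d with dual norm ‖θ‖_* = sup{⟨θ, x⟩ : ‖x‖ ≤ 1}, and let c(z, ẑ) = ‖z − ẑ‖². Fix θ ∈ ℝ^d and ε > 0, and suppose P̂ satisfies ∫ ⟨θ, ẑ⟩² dP̂(ẑ) < ∞ and P̂({ẑ : ⟨θ, ẑ⟩ ≠ 0}) > 0. Then sup_{Q ∈ B_ε(P̂)} ∫ ⟨θ, z⟩² dQ(z) = ( ( ∫ ⟨θ, ẑ⟩² dP̂(ẑ) )^{1/2} + √ε · ‖θ‖_* )². -/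

import Mathlib

open MeasureTheory ENNReal Set

noncomputable section

/-- The set of couplings of two measures. -/
def couplings {α : Type*} [MeasurableSpace α] (Q P : Measure α) : Set (Measure (α × α)) :=
  {π | π.map Prod.fst = Q ∧ π.map Prod.snd = P}

/-- The optimal transport discrepancy `d_c(Q, P) = inf_π ∫ c dπ`. -/
def OTDiscrepancy {α : Type*} [MeasurableSpace α] (c : α → α → ℝ≥0∞) (Q P : Measure α) :
    ℝ≥0∞ :=
  ⨅ π ∈ couplings Q P, ∫⁻ p, c p.1 p.2 ∂π

/-- The optimal transport ambiguity set `B_ε(P) = {Q : d_c(Q, P) ≤ ε}`. -/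
def ambiguitySet {α : Type*} [MeasurableSpace α] (c : α → α → ℝ≥0∞)
    (P : ProbabilityMeasure α) (ε : ℝ) : Set (ProbabilityMeasure α) :=
  {Q | OTDiscrepancy c Q.toMeasure P.toMeasure ≤ ENNReal.ofReal ε}

/-- The inner product `⟨x, y⟩ = Σ_i x_i y_i` on `ℝ^d`. -/
def dotp {d : ℕ} (x y : Fin d → ℝ) : ℝ := ∑ i, x i * y i

/-- The dual norm `‖θ‖_* = sup {⟨θ, x⟩ : ‖x‖ ≤ 1}` of a norm `N` on `ℝ^d`. -/
def dualNorm {d : ℕ} (N : (Fin d → ℝ) → ℝ) (θ : Fin d → ℝ) : ℝ :=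
  sSup {r : ℝ | ∃ x : Fin d → ℝ, N x ≤ 1 ∧ r = dotp θ x}

/-!
Write `L z = ⟨θ, z⟩` and `K = ‖θ‖_*`, so that `|L z| ≤ |L ẑ| + K ‖z - ẑ‖`. For any coupling `π`
of `Q` and `P̂`, Minkowski's inequality in `L²(π)` then gives
`‖L‖_{L²(Q)} ≤ ‖L‖_{L²(P̂)} + K (∫ ‖z - ẑ‖² dπ)^{1/2}`, and letting the transport cost decrease
to `d_c(Q, P̂) ≤ ε` bounds the supremum. Since the unit ball of a norm on `ℝ^d` is compact, there is
`x⋆` with `‖x⋆‖ ≤ 1` and `⟨θ, x⋆⟩ = K`; pushing `P̂` forward along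
`z ↦ z + (√ε / ‖L‖_{L²(P̂)}) L(z) x⋆` costs at most `ε` and multiplies `L` by
`1 + √ε K / ‖L‖_{L²(P̂)}`, so the bound is attained.
-/

namespace Seminorm

variable {E : Type*} [NormedAddCommGroup E] [NormedSpace ℝ E] [FiniteDimensional ℝ E]
  (p : Seminorm ℝ E)

protected theorem continuous_of_finiteDimensional : Continuous p :=
  p.convexOn.locallyLipschitz.continuous

theorem exists_pos_mul_norm_le (hp : ∀ x, p x = 0 → x = 0) : ∃ c > 0, ∀ x, c * ‖x‖ ≤ p x := by
  obtain ⟨c, hc, hcp⟩ := (isCompact_sphere (0 : E) 1).exists_forall_le'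
    p.continuous_of_finiteDimensional.continuousOn fun x hx ↦
      (apply_nonneg p x).lt_of_ne fun h ↦ by simp [hp x h.symm] at hx
  refine ⟨c, hc, fun x ↦ ?_⟩
  rcases eq_or_ne x 0 with rfl | hx
  · simp
  have hxpos : 0 < ‖x‖ := norm_pos_iff.mpr hx
  have := hcp (‖x‖⁻¹ • x) (by simp [norm_smul, hxpos.ne'])
  rw [map_smul_eq_mul, Real.norm_eq_abs, abs_inv, abs_norm, le_inv_mul_iff₀ hxpos] at this
  linarith

theorem isCompact_closedBall_zero (hp : ∀ x, p x = 0 → x = 0) (r : ℝ) :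
    IsCompact (p.closedBall 0 r) := by
  obtain ⟨c, hc, hcp⟩ := p.exists_pos_mul_norm_le hp
  refine (isCompact_closedBall (0 : E) (r / c)).of_isClosed_subset ?_ fun x hx ↦ ?_
  · rw [closedBall_zero_eq]
    exact isClosed_le p.continuous_of_finiteDimensional continuous_const
  · rw [mem_closedBall_zero] at hx
    rw [Metric.mem_closedBall, dist_zero_right, le_div_iff₀ hc]
    linarith [hcp x]

end Seminorm

section Transport

variable {α : Type*} [MeasurableSpace α]

theorem lintegral_ofReal_sq_eq_eLpNorm_sq (f : α → ℝ) (μ : Measure α) :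
    ∫⁻ x, ENNReal.ofReal (f x ^ 2) ∂μ = eLpNorm f 2 μ ^ 2 := by
  rw [eLpNorm_eq_lintegral_rpow_enorm_toReal two_ne_zero ENNReal.ofNat_ne_top,
    ENNReal.toReal_ofNat, ← ENNReal.rpow_natCast, ← ENNReal.rpow_mul]
  norm_num
  refine lintegral_congr fun x ↦ ?_
  rw [Real.enorm_eq_ofReal_abs, ← ENNReal.ofReal_pow (abs_nonneg _), sq_abs]

theorem eLpNorm_le_of_mem_couplings {Q P : Measure α} {π : Measure (α × α)}
    (hπ : π ∈ couplings Q P) {f : α → ℝ} (hf : Measurable f) {D : α → α → ℝ}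
    (hD : Measurable (Function.uncurry D)) {K : ℝ} (hK : 0 ≤ K)
    (hfD : ∀ x y, |f x| ≤ |f y| + K * D x y) :
    eLpNorm f 2 Q ≤ eLpNorm f 2 P + ENNReal.ofReal K * eLpNorm (Function.uncurry D) 2 π := by
  obtain ⟨rfl, rfl⟩ := hπ
  rw [eLpNorm_map_measure hf.aestronglyMeasurable measurable_fst.aemeasurable,
    eLpNorm_map_measure hf.aestronglyMeasurable measurable_snd.aemeasurable]
  calc eLpNorm (f ∘ Prod.fst) 2 π
      ≤ eLpNorm ((fun z ↦ ‖f z.2‖) + K • Function.uncurry D) 2 π :=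
        eLpNorm_mono_real fun z ↦ by
          simpa only [Function.comp_apply, Real.norm_eq_abs, Pi.add_apply, Pi.smul_apply,
            smul_eq_mul, Function.uncurry, abs_abs] using hfD z.1 z.2
    _ ≤ eLpNorm (fun z ↦ ‖f z.2‖) 2 π + eLpNorm (K • Function.uncurry D) 2 π := by
        refine eLpNorm_add_le ?_ ?_ (by norm_num)
        · exact (hf.comp measurable_snd).norm.aestronglyMeasurable
        · exact (hD.const_smul K).aestronglyMeasurable
    _ = _ := by rw [eLpNorm_norm, eLpNorm_const_smul, Real.enorm_of_nonneg hK]; rfl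

theorem lintegral_ofReal_const_mul (μ : Measure α) {a : ℝ} (ha : 0 ≤ a) (g : α → ℝ) :
    ∫⁻ x, ENNReal.ofReal (a * g x) ∂μ = ENNReal.ofReal a * ∫⁻ x, ENNReal.ofReal (g x) ∂μ := by
  simp_rw [ENNReal.ofReal_mul ha]
  exact lintegral_const_mul' _ _ ENNReal.ofReal_ne_top

theorem lintegral_sq_le_of_mem_couplings {P Q : Measure α} {π : Measure (α × α)}
    (hπ : π ∈ couplings Q P) {f : α → ℝ} (hf : Measurable f)
    (hf2 : Integrable (fun x ↦ f x ^ 2) P) {D : α → α → ℝ}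
    (hD : Measurable (Function.uncurry D)) {K : ℝ} (hK : 0 ≤ K)
    (hfD : ∀ x y, |f x| ≤ |f y| + K * D x y) {η : ℝ} (hη : 0 ≤ η)
    (hcost : ∫⁻ z, ENNReal.ofReal (D z.1 z.2 ^ 2) ∂π ≤ ENNReal.ofReal η) :
    ∫⁻ x, ENNReal.ofReal (f x ^ 2) ∂Q ≤
      ENNReal.ofReal ((Real.sqrt (∫ x, f x ^ 2 ∂P) + Real.sqrt η * K) ^ 2) := by
  have hP : eLpNorm f 2 P = ENNReal.ofReal (Real.sqrt (∫ x, f x ^ 2 ∂P)) := by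
    refine (ENNReal.pow_right_strictMono two_ne_zero).injective ?_
    rw [← lintegral_ofReal_sq_eq_eLpNorm_sq, ← ENNReal.ofReal_pow (Real.sqrt_nonneg _),
      Real.sq_sqrt (integral_nonneg fun x ↦ sq_nonneg _),
      ofReal_integral_eq_lintegral_ofReal hf2 (ae_of_all _ fun x ↦ sq_nonneg _)]
  have hDπ : eLpNorm (Function.uncurry D) 2 π ≤ ENNReal.ofReal (Real.sqrt η) := by
    rw [← ENNReal.pow_le_pow_left_iff two_ne_zero, ← lintegral_ofReal_sq_eq_eLpNorm_sq,
      ← ENNReal.ofReal_pow (Real.sqrt_nonneg _), Real.sq_sqrt hη]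
    exact hcost
  rw [lintegral_ofReal_sq_eq_eLpNorm_sq, ENNReal.ofReal_pow (by positivity),
    ENNReal.pow_le_pow_left_iff two_ne_zero, ENNReal.ofReal_add (by positivity) (by positivity),
    ENNReal.ofReal_mul (Real.sqrt_nonneg _), mul_comm, ← hP]
  calc eLpNorm f 2 Q
      ≤ eLpNorm f 2 P + ENNReal.ofReal K * eLpNorm (Function.uncurry D) 2 π :=
        eLpNorm_le_of_mem_couplings hπ hf hD hK hfD
    _ ≤ eLpNorm f 2 P + ENNReal.ofReal K * ENNReal.ofReal (Real.sqrt η) := by gcongr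

theorem lintegral_sq_le_of_mem_ambiguitySet {P Q : ProbabilityMeasure α} {f : α → ℝ}
    (hf : Measurable f) (hf2 : Integrable (fun x ↦ f x ^ 2) P.toMeasure) {D : α → α → ℝ}
    (hD : Measurable (Function.uncurry D)) {K : ℝ} (hK : 0 ≤ K)
    (hfD : ∀ x y, |f x| ≤ |f y| + K * D x y) {ε : ℝ} (hε : 0 ≤ ε)
    (hQ : Q ∈ ambiguitySet (fun x y ↦ ENNReal.ofReal (D x y ^ 2)) P ε) :
    ∫⁻ x, ENNReal.ofReal (f x ^ 2) ∂Q.toMeasure ≤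
      ENNReal.ofReal ((Real.sqrt (∫ x, f x ^ 2 ∂P.toMeasure) + Real.sqrt ε * K) ^ 2) := by
  have hbound : ∀ η ∈ Ioi ε, ∫⁻ x, ENNReal.ofReal (f x ^ 2) ∂Q.toMeasure ≤
      ENNReal.ofReal ((Real.sqrt (∫ x, f x ^ 2 ∂P.toMeasure) + Real.sqrt η * K) ^ 2) := by
    intro η hη
    obtain ⟨π, hπ, hcost⟩ : ∃ π ∈ couplings Q.toMeasure P.toMeasure,
        ∫⁻ z, ENNReal.ofReal (D z.1 z.2 ^ 2) ∂π < ENNReal.ofReal η := by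
      have := hQ.trans_lt ((ENNReal.ofReal_lt_ofReal_iff (hε.trans_lt hη)).2 hη)
      simpa only [OTDiscrepancy, iInf_lt_iff, exists_prop] using this
    exact lintegral_sq_le_of_mem_couplings hπ hf hf2 hD hK hfD (hε.trans hη.le) hcost.le
  have hcont : Continuous fun η ↦
      ENNReal.ofReal ((Real.sqrt (∫ x, f x ^ 2 ∂P.toMeasure) + Real.sqrt η * K) ^ 2) :=
    ENNReal.continuous_ofReal.comp (by fun_prop)
  exact ge_of_tendsto (hcont.continuousAt.tendsto.mono_left nhdsWithin_le_nhds)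
    (eventually_nhdsWithin_of_forall hbound)

theorem map_mem_ambiguitySet {c : α → α → ℝ≥0∞} {P : ProbabilityMeasure α} {T : α → α}
    (hT : Measurable T) {ε : ℝ} (hcost : ∫⁻ x, c (T x) x ∂P.toMeasure ≤ ENNReal.ofReal ε) :
    P.map hT.aemeasurable ∈ ambiguitySet c P ε := by
  have hTid : Measurable fun x ↦ (T x, x) := hT.prodMk measurable_id
  have hπ : P.toMeasure.map (fun x ↦ (T x, x)) ∈
      couplings (P.map hT.aemeasurable).toMeasure P.toMeasure := by
    refine ⟨?_, ?_⟩ <;> rw [Measure.map_map (by fun_prop) hTid]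
    · rfl
    · exact Measure.map_id
  calc OTDiscrepancy c (P.map hT.aemeasurable).toMeasure P.toMeasure
      ≤ ∫⁻ z, c z.1 z.2 ∂(P.toMeasure.map fun x ↦ (T x, x)) := iInf₂_le _ hπ
    _ ≤ ∫⁻ x, c (T x) x ∂P.toMeasure := lintegral_map_le _ _
    _ ≤ ENNReal.ofReal ε := hcost

end Transport

section DotProduct

variable {d : ℕ}

theorem dotp_eq_dotProduct (θ x : Fin d → ℝ) : dotp θ x = θ ⬝ᵥ x := rfl

@[fun_prop]
theorem continuous_dotp (θ : Fin d → ℝ) : Continuous (dotp θ) :=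
  continuous_finsetSum _ fun i _ ↦ continuous_const.mul (continuous_apply i)

section DualNorm

variable (p : Seminorm ℝ (Fin d → ℝ)) (hp : ∀ x, p x = 0 → x = 0) (θ : Fin d → ℝ)
include hp

theorem isGreatest_dualNorm :
    IsGreatest {r | ∃ x, p x ≤ 1 ∧ r = dotp θ x} (dualNorm p θ) := by
  have hset : {r | ∃ x, p x ≤ 1 ∧ r = dotp θ x} = dotp θ '' p.closedBall 0 1 := by
    ext r
    simp [eq_comm]
  rw [dualNorm, hset]
  exact ((p.isCompact_closedBall_zero hp 1).image (continuous_dotp θ)).isGreatest_sSup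
    ⟨0, 0, by simp, dotProduct_zero θ⟩

theorem dualNorm_nonneg : 0 ≤ dualNorm p θ :=
  (isGreatest_dualNorm p hp θ).2 ⟨0, by simp, (dotProduct_zero θ).symm⟩

theorem dotp_le_dualNorm_mul (v : Fin d → ℝ) : dotp θ v ≤ dualNorm p θ * p v := by
  rcases (apply_nonneg p v).eq_or_lt with hv | hv
  · simp [hp v hv.symm, dotp_eq_dotProduct]
  have hle := (isGreatest_dualNorm p hp θ).2 ⟨(p v)⁻¹ • v, by
    rw [map_smul_eq_mul, norm_inv, Real.norm_of_nonneg hv.le, inv_mul_cancel₀ hv.ne'], rfl⟩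
  rw [dotp_eq_dotProduct, dotProduct_smul, smul_eq_mul, inv_mul_le_iff₀ hv, mul_comm] at hle
  exact hle

theorem abs_dotp_le_dualNorm_mul (v : Fin d → ℝ) : |dotp θ v| ≤ dualNorm p θ * p v := by
  refine abs_le'.mpr ⟨dotp_le_dualNorm_mul p hp θ v, ?_⟩
  simpa [dotp_eq_dotProduct] using dotp_le_dualNorm_mul p hp θ (-v)

theorem abs_dotp_le_abs_dotp_add_dualNorm_mul (z w : Fin d → ℝ) :
    |dotp θ z| ≤ |dotp θ w| + dualNorm p θ * p (z - w) := by
  calc |dotp θ z| = |dotp θ w + dotp θ (z - w)| := by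
        simp only [dotp_eq_dotProduct, dotProduct_sub, add_sub_cancel]
    _ ≤ |dotp θ w| + dualNorm p θ * p (z - w) :=
        (abs_add_le _ _).trans (add_le_add le_rfl (abs_dotp_le_dualNorm_mul p hp θ _))

end DualNorm

theorem exists_mem_ambiguitySet_lintegral_dotp_sq_eq (p : Seminorm ℝ (Fin d → ℝ))
    (P : ProbabilityMeasure (Fin d → ℝ)) {θ : Fin d → ℝ}
    (hint : Integrable (fun z ↦ dotp θ z ^ 2) P.toMeasure)
    (hE : 0 < ∫ z, dotp θ z ^ 2 ∂P.toMeasure) {ε : ℝ} (hε : 0 ≤ ε)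
    {x : Fin d → ℝ} (hx : p x ≤ 1) :
    ∃ Q ∈ ambiguitySet (fun z zhat ↦ ENNReal.ofReal (p (z - zhat) ^ 2)) P ε,
      ∫⁻ z, ENNReal.ofReal (dotp θ z ^ 2) ∂Q.toMeasure =
        ENNReal.ofReal ((Real.sqrt (∫ z, dotp θ z ^ 2 ∂P.toMeasure) +
          Real.sqrt ε * dotp θ x) ^ 2) := by
  set E := ∫ z, dotp θ z ^ 2 ∂P.toMeasure
  have hsE : 0 < Real.sqrt E := Real.sqrt_pos.mpr hE
  set s := Real.sqrt ε / Real.sqrt E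
  have hs : s ^ 2 * E = ε := by
    rw [div_pow, Real.sq_sqrt hε, Real.sq_sqrt hE.le, div_mul_cancel₀ _ hE.ne']
  have hlE : ∫⁻ z, ENNReal.ofReal (dotp θ z ^ 2) ∂P.toMeasure = ENNReal.ofReal E :=
    (ofReal_integral_eq_lintegral_ofReal hint (ae_of_all _ fun z ↦ sq_nonneg _)).symm
  set T : (Fin d → ℝ) → Fin d → ℝ := fun z ↦ z + (s * dotp θ z) • x
  have hT : Measurable T := by fun_prop
  refine ⟨P.map hT.aemeasurable, map_mem_ambiguitySet hT ?_, ?_⟩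
  · calc ∫⁻ z, ENNReal.ofReal (p (T z - z) ^ 2) ∂P.toMeasure
        = ∫⁻ z, ENNReal.ofReal ((s * p x) ^ 2 * dotp θ z ^ 2) ∂P.toMeasure := by
          refine lintegral_congr fun z ↦ ?_
          simp only [T, add_sub_cancel_left, map_smul_eq_mul, Real.norm_eq_abs]
          rw [abs_mul, abs_of_nonneg (by positivity : 0 ≤ s), mul_pow, mul_pow, sq_abs]
          ring_nf
      _ ≤ ∫⁻ z, ENNReal.ofReal (s ^ 2 * dotp θ z ^ 2) ∂P.toMeasure := by
          gcongr with z
          exact mul_le_of_le_one_right (by positivity) hx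
      _ = ENNReal.ofReal ε := by
          rw [lintegral_ofReal_const_mul _ (sq_nonneg s), hlE,
            ← ENNReal.ofReal_mul (sq_nonneg s), hs]
  · have hTθ : ∀ z, dotp θ (T z) = (1 + s * dotp θ x) * dotp θ z := by
      intro z
      simp only [T, dotp_eq_dotProduct, dotProduct_add, dotProduct_smul, smul_eq_mul]
      ring
    rw [ProbabilityMeasure.toMeasure_map, lintegral_map (by fun_prop) hT]
    simp_rw [hTθ, mul_pow]
    rw [lintegral_ofReal_const_mul _ (sq_nonneg _), hlE, ← ENNReal.ofReal_mul (sq_nonneg _)]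
    congr 1
    have hsE' : s * Real.sqrt E = Real.sqrt ε := div_mul_cancel₀ _ hsE.ne'
    linear_combination (-(1 + s * dotp θ x) ^ 2) * Real.sq_sqrt hE.le +
      dotp θ x * (2 * Real.sqrt E + s * dotp θ x * Real.sqrt E + Real.sqrt ε * dotp θ x) * hsE'

end DotProduct

/-- **Worst-case expectation of the quadratic loss.**
For the quadratic transportation cost `c(z, ẑ) = ‖z − ẑ‖²`, a square-integrable linear form
that does not vanish `P̂`-almost surely, and `ε > 0`, the worst-case second moment equals
`(√(E_P̂[⟨θ, ẑ⟩²]) + √ε ‖θ‖_*)²`. -/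
theorem worst_case_quadratic_loss {d : ℕ}
    (N : (Fin d → ℝ) → ℝ)
    (hN0 : ∀ x, N x = 0 ↔ x = 0)
    (hNhom : ∀ (a : ℝ) x, N (a • x) = |a| * N x)
    (hNtri : ∀ x y, N (x + y) ≤ N x + N y)
    (Phat : ProbabilityMeasure (Fin d → ℝ))
    (θ : Fin d → ℝ)
    (hint : Integrable (fun zhat => (dotp θ zhat) ^ 2) Phat.toMeasure)
    (hpos : 0 < Phat.toMeasure {zhat | dotp θ zhat ≠ 0})
    (ε : ℝ) (hε : 0 < ε) :
    (⨆ Q ∈ ambiguitySet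
        (fun z zhat : Fin d → ℝ => ENNReal.ofReal (N (z - zhat) ^ 2)) Phat ε,
      ∫⁻ z, ENNReal.ofReal ((dotp θ z) ^ 2) ∂Q.toMeasure) =
    ENNReal.ofReal
      ((Real.sqrt (∫ zhat, (dotp θ zhat) ^ 2 ∂Phat.toMeasure) +
        Real.sqrt ε * dualNorm N θ) ^ 2) := by
  obtain ⟨p, rfl⟩ : ∃ p : Seminorm ℝ (Fin d → ℝ), ⇑p = N :=
    ⟨Seminorm.of N hNtri fun a x ↦ by rw [Real.norm_eq_abs, hNhom], rfl⟩
  have hp : ∀ x, p x = 0 → x = 0 := fun x ↦ (hN0 x).1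
  have hE : 0 < ∫ zhat, dotp θ zhat ^ 2 ∂Phat.toMeasure := by
    rw [integral_pos_iff_support_of_nonneg (fun z ↦ sq_nonneg _) hint]
    simpa [Function.support] using hpos
  refine le_antisymm (iSup₂_le fun Q hQ ↦ ?_) ?_
  · have hD : Measurable (Function.uncurry fun z zhat : Fin d → ℝ ↦ p (z - zhat)) :=
      (p.continuous_of_finiteDimensional.comp (continuous_fst.sub continuous_snd)).measurable
    exact lintegral_sq_le_of_mem_ambiguitySet (continuous_dotp θ).measurable hint hD
      (dualNorm_nonneg p hp θ) (abs_dotp_le_abs_dotp_add_dualNorm_mul p hp θ) hε.le hQ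
  · obtain ⟨x, hx, hxθ⟩ := (isGreatest_dualNorm p hp θ).1
    obtain ⟨Q, hQ, hQθ⟩ := exists_mem_ambiguitySet_lintegral_dotp_sq_eq p Phat hint hE hε.le hx
    rw [hxθ, ← hQθ]
    exact le_iSup₂ (f := fun Q _ ↦ ∫⁻ z, ENNReal.ofReal (dotp θ z ^ 2) ∂Q.toMeasure) Q hQ
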